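/- Let p ∈ [1,∞) and let q₁, q₂ ∈ [1,∞) satisfy 2p/(p+2) < q₁ ≤ p and p/(p+1) < q₂ < 2p/(p+2). Then there exists a constant C > 0 (depending only on p, q₁, q₂) such that for every f ∈ L^{q₁}(ℝ²) ∩ L^{q₂}(ℝ²), the convolution K∗f is (almost everywhere) well defined, belongs to L^p(ℝ²), and ‖K∗f‖_{L^p(ℝ²)} ≤ C (‖f‖_{L^{q₁}(ℝ²)} + ‖f‖_{L^{q₂}(ℝ²)}). -/

import Mathlib

noncomputable section

open MeasureTheory Real Classical

abbrev R2 : Type := EuclideanSpace ℝ (Fin 2)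

/-- The kernel `K = ∇G`, gradient of the 2d Poisson kernel `G(x) = -(1/(2π)) log |x|²`,
i.e. `K(x) = -x / (π |x|²)` for `x ≠ 0`, with `K(0) = 0`. -/
noncomputable def K (x : R2) : R2 := if x = 0 then 0 else (-(π * ‖x‖ ^ 2)⁻¹) • x

/-- The 2d heat kernel `p_t(x) = (4πt)⁻¹ exp(-|x|²/(4t))`. -/
noncomputable def heatKernel (t : ℝ) (x : R2) : ℝ :=
  (4 * π * t)⁻¹ * Real.exp (-‖x‖ ^ 2 / (4 * t))

/-- The convolution `K ∗ f` (vector valued). -/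
noncomputable def Kconv (f : R2 → ℝ) (x : R2) : R2 := ∫ y : R2, f y • K (x - y)

/-- The heat semigroup `e^{tΔ} f = p_t ∗ f`. -/
noncomputable def heatConv (t : ℝ) (f : R2 → ℝ) (x : R2) : ℝ :=
  ∫ y : R2, heatKernel t (x - y) * f y

/-- The `L¹ ∩ H¹` norm `‖u‖_{L¹} + ‖u‖_{L²} + ‖∇u‖_{L²}`. -/
noncomputable def L1H1norm (u : R2 → ℝ) : ℝ :=
  (eLpNorm u 1 volume).toReal + (eLpNorm u 2 volume).toReal +
    (eLpNorm (gradient u) 2 volume).toReal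

/-- `u` is of class `C_b([0,T); L¹ ∩ H¹(ℝ²))`. -/
structure IsCbL1H1 (T : ℝ) (u : ℝ → R2 → ℝ) : Prop where
  integrable : ∀ t ∈ Set.Ico (0 : ℝ) T, Integrable (u t)
  memL2 : ∀ t ∈ Set.Ico (0 : ℝ) T, MemLp (u t) 2 volume
  diff : ∀ t ∈ Set.Ico (0 : ℝ) T, Differentiable ℝ (u t)
  gradL2 : ∀ t ∈ Set.Ico (0 : ℝ) T, MemLp (gradient (u t)) 2 volume
  norm_cont : ContinuousOn (fun t => L1H1norm (u t)) (Set.Ico 0 T)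
  norm_bdd : BddAbove ((fun t => L1H1norm (u t)) '' Set.Ico 0 T)

/-- The right-hand side of the mild (Duhamel) formulation, with drift nonlinearity
`F (K ∗ u_s)`:  `(p_t ∗ ρ₀)(x) - ∫₀ᵗ Σᵢ (∂ᵢ p_{t-s} ∗ (u_s · F(K∗u_s)ᵢ))(x) ds`. -/
noncomputable def mildRHS (F : R2 → R2) (ρ₀ : R2 → ℝ) (u : ℝ → R2 → ℝ) (t : ℝ) (x : R2) : ℝ :=
  heatConv t ρ₀ x -
    ∫ s in Set.Ioc (0 : ℝ) t, ∫ y : R2,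
      ∑ i : Fin 2, gradient (heatKernel (t - s)) (x - y) i * (u s y * F (Kconv (u s) y) i)

/-- `u` is a mild solution on `[0,T)` of `∂ₜρ = Δρ - ∇·(ρ F(K∗ρ))` with initial datum `ρ₀`.
Taking `F = id` gives the parabolic-elliptic Keller-Segel equation. -/
def IsMildKSF (F : R2 → R2) (T : ℝ) (ρ₀ : R2 → ℝ) (u : ℝ → R2 → ℝ) : Prop :=
  IsCbL1H1 T u ∧ ∀ t ∈ Set.Ioo (0 : ℝ) T, ∀ᵐ x : R2 ∂volume, u t x = mildRHS F ρ₀ u t x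

/-- `f` is a cut-off function at level `A`. -/
structure IsCutoff (A : ℝ) (f : ℝ → ℝ) : Prop where
  contDiff : ContDiff ℝ 2 f
  eq_id : ∀ x : ℝ, |x| ≤ A → f x = x
  bound : ∀ x : ℝ, |f x| ≤ A + 1
  deriv_bound : ∀ x : ℝ, |deriv f x| ≤ 1
  deriv2_bound : ∃ C : ℝ, ∀ x : ℝ, |deriv (deriv f) x| ≤ C

/-- The componentwise cut-off map `F_A : ℝ² → ℝ²`. -/
noncomputable def FA (f : ℝ → ℝ) (x : R2) : R2 := WithLp.toLp 2 (fun i => f (x i))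

/-!
Since `‖K z‖ ≤ ‖z‖⁻¹`, the function `|K ∗ f|` is dominated pointwise by the convolution of `|f|`
with `‖z‖⁻¹`. Split `‖z‖⁻¹` into its restriction to the unit ball, which lies in `L^r` for
`r < 2`, and its restriction to the complement, which lies in `L^r` for `r > 2`. Young's
inequality `‖g ⋆ k‖_p ≤ ‖g‖_q ‖k‖_r`, `1/q + 1/r = 1 + 1/p`, bounds the first piece by
`‖f‖_{q₁}` (here `r < 2` is exactly `q₁ > 2p/(p+2)`) and the second by `‖f‖_{q₂}` (here `r > 2` is
exactly `q₂ < 2p/(p+2)`). The majorant being in `L^p`, it is finite a.e., which is the a.e.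
absolute convergence of the integral defining `K ∗ f`.
-/

open scoped ENNReal
open Metric

theorem ENNReal.lintegral_rpow_mul_rpow_mul_rpow_le {α : Type*} [MeasurableSpace α]
    {μ : Measure α} {f g h : α → ℝ≥0∞}
    (hf : AEMeasurable f μ) (hg : AEMeasurable g μ) (hh : AEMeasurable h μ)
    {a b c : ℝ} (ha : 0 ≤ a) (hb : 0 ≤ b) (hc : 0 ≤ c) (habc : a + b + c = 1) :
    ∫⁻ x, f x ^ a * g x ^ b * h x ^ c ∂μ ≤
      (∫⁻ x, f x ∂μ) ^ a * (∫⁻ x, g x ∂μ) ^ b * (∫⁻ x, h x ∂μ) ^ c := by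
  have := ENNReal.lintegral_prod_norm_pow_le (μ := μ) Finset.univ (f := ![f, g, h])
    (p := ![a, b, c]) (by intro i _; fin_cases i <;> assumption)
    (by simpa [Fin.sum_univ_three]) (by intro i _; fin_cases i <;> assumption)
  simpa [Fin.prod_univ_three, mul_assoc] using this

namespace MeasureTheory

section LConvolution

variable {G : Type*} [MeasurableSpace G] {μ : Measure G}

theorem lintegral_lconvolution [AddGroup G] [MeasurableAdd₂ G] [MeasurableNeg G]
    [μ.IsAddLeftInvariant] [SFinite μ] {f g : G → ℝ≥0∞}
    (hf : AEMeasurable f μ) (hg : AEMeasurable g μ) :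
    ∫⁻ x, (f ⋆ₗ[μ] g) x ∂μ = (∫⁻ x, f x ∂μ) * ∫⁻ x, g x ∂μ := by
  simp only [lconvolution_def]
  rw [lintegral_lintegral_swap (by fun_prop), ← lintegral_mul_const'' _ hf]
  refine lintegral_congr fun y => ?_
  rw [lintegral_add_left_eq_self (fun z => f y * g z) (-y), lintegral_const_mul'' _ hg]

theorem lconvolution_add_right [AddGroup G] [MeasurableAdd G] [MeasurableNeg G]
    {f g h : G → ℝ≥0∞} (hf : AEMeasurable f μ) (hg : Measurable g) :
    f ⋆ₗ[μ] (g + h) = f ⋆ₗ[μ] g + f ⋆ₗ[μ] h := by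
  ext x
  simp only [lconvolution_def, Pi.add_apply, mul_add]
  exact lintegral_add_left' (hf.mul (by fun_prop)) _

theorem lintegral_neg_add_eq_self [AddCommGroup G] [MeasurableAdd G] [MeasurableNeg G]
    [μ.IsAddLeftInvariant] [μ.IsNegInvariant] (g : G → ℝ≥0∞) (x : G) :
    ∫⁻ y, g (-y + x) ∂μ = ∫⁻ y, g y ∂μ := by
  rw [lintegral_neg_eq_self (fun y => g (y + x)), lintegral_add_right_eq_self]

theorem eLpNorm'_lconvolution_le [AddCommGroup G] [MeasurableAdd₂ G] [MeasurableNeg G]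
    [μ.IsAddLeftInvariant] [μ.IsNegInvariant] [SFinite μ] {f g : G → ℝ≥0∞}
    (hf : AEMeasurable f μ) (hg : AEMeasurable g μ) {p q r : ℝ} (hp : 0 < p) (hq : 0 < q)
    (hpr : p ≤ r) (hqr : q ≤ r) (hpqr : 1 / p + 1 / q = 1 + 1 / r) :
    eLpNorm' (f ⋆ₗ[μ] g) r μ ≤ eLpNorm' f p μ * eLpNorm' g q μ := by
  have hr : 0 < r := hp.trans_le hpr
  have ha : 0 ≤ 1 / p - 1 / r := sub_nonneg.2 (one_div_le_one_div_of_le hp hpr)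
  have hb : 0 ≤ 1 / q - 1 / r := sub_nonneg.2 (one_div_le_one_div_of_le hq hqr)
  set A := ∫⁻ y, f y ^ p ∂μ
  set B := ∫⁻ y, g y ^ q ∂μ
  set C := A ^ (1 / p - 1 / r) * B ^ (1 / q - 1 / r)
  set I := (fun y => f y ^ p) ⋆ₗ[μ] (fun y => g y ^ q)
  have hI : ∫⁻ x, I x ∂μ = A * B := lintegral_lconvolution (hf.pow_const p) (hg.pow_const q)
  -- Hölder with exponents `1/r`, `1/p - 1/r`, `1/q - 1/r` applied to `f^p g^q`, `f^p`, `g^q`.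
  have hsplit : ∀ a b : ℝ≥0∞, a * b =
      (a ^ p * b ^ q) ^ (1 / r) * (a ^ p) ^ (1 / p - 1 / r) * (b ^ q) ^ (1 / q - 1 / r) := by
    intro a b
    calc a * b = (a ^ p) ^ (1 / r + (1 / p - 1 / r)) * (b ^ q) ^ (1 / r + (1 / q - 1 / r)) := by
          rw [add_sub_cancel, add_sub_cancel, ← ENNReal.rpow_mul, ← ENNReal.rpow_mul,
            mul_one_div_cancel hp.ne', mul_one_div_cancel hq.ne', ENNReal.rpow_one,
            ENNReal.rpow_one]
      _ = _ := by
          rw [ENNReal.rpow_add_of_nonneg _ _ (by positivity) ha,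
            ENNReal.rpow_add_of_nonneg _ _ (by positivity) hb,
            ENNReal.mul_rpow_of_nonneg _ _ (by positivity)]
          ring
  have hpointwise : ∀ x, (f ⋆ₗ[μ] g) x ≤ I x ^ (1 / r) * C := by
    intro x
    have hgx : AEMeasurable (fun y => g (-y + x)) μ := by fun_prop
    calc (f ⋆ₗ[μ] g) x = ∫⁻ y, (f y ^ p * g (-y + x) ^ q) ^ (1 / r) *
          (f y ^ p) ^ (1 / p - 1 / r) * (g (-y + x) ^ q) ^ (1 / q - 1 / r) ∂μ := by
          simp only [lconvolution_def, ← hsplit]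
      _ ≤ I x ^ (1 / r) * A ^ (1 / p - 1 / r) * (∫⁻ y, g (-y + x) ^ q ∂μ) ^ (1 / q - 1 / r) :=
        ENNReal.lintegral_rpow_mul_rpow_mul_rpow_le (by fun_prop) (by fun_prop)
          (hgx.pow_const q) (by positivity) ha hb (by linarith)
      _ = I x ^ (1 / r) * C := by
          rw [lintegral_neg_add_eq_self (fun y => g y ^ q), mul_assoc]
  calc eLpNorm' (f ⋆ₗ[μ] g) r μ = (∫⁻ x, (f ⋆ₗ[μ] g) x ^ r ∂μ) ^ (1 / r) := by simp [eLpNorm']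
    _ ≤ (∫⁻ x, I x * C ^ r ∂μ) ^ (1 / r) := by
        gcongr with x
        calc (f ⋆ₗ[μ] g) x ^ r ≤ (I x ^ (1 / r) * C) ^ r := by gcongr; exact hpointwise x
          _ = I x * C ^ r := by
            rw [ENNReal.mul_rpow_of_nonneg _ _ hr.le, ← ENNReal.rpow_mul,
              one_div_mul_cancel hr.ne', ENNReal.rpow_one]
    _ = (A * B) ^ (1 / r) * C := by
        rw [lintegral_mul_const'' _ (aemeasurable_lconvolution (by fun_prop) (by fun_prop)), hI,
          ENNReal.mul_rpow_of_nonneg _ _ (by positivity), ← ENNReal.rpow_mul,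
          mul_one_div_cancel hr.ne', ENNReal.rpow_one]
    _ = A ^ (1 / p) * B ^ (1 / q) := by
        rw [ENNReal.mul_rpow_of_nonneg _ _ (by positivity), mul_mul_mul_comm,
          ← ENNReal.rpow_add_of_nonneg _ _ (by positivity) ha,
          ← ENNReal.rpow_add_of_nonneg _ _ (by positivity) hb, add_sub_cancel, add_sub_cancel]
    _ = eLpNorm' f p μ * eLpNorm' g q μ := by simp [eLpNorm', A, B]

end LConvolution

theorem ae_lt_top_of_eLpNorm_lt_top {α : Type*} [MeasurableSpace α] {μ : Measure α}
    {f : α → ℝ≥0∞} (hf : AEMeasurable f μ) {p : ℝ≥0∞} (hp0 : p ≠ 0) (hp : p ≠ ∞)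
    (h : eLpNorm f p μ < ∞) : ∀ᵐ x ∂μ, f x < ∞ := by
  filter_upwards [ae_lt_top' (hf.pow_const _)
    (lintegral_rpow_enorm_lt_top_of_eLpNorm_lt_top hp0 hp h).ne] with x hx
  exact (ENNReal.rpow_lt_top_iff_of_pos (ENNReal.toReal_pos hp0 hp)).1 hx

theorem integrableOn_compl_ball_norm_rpow_neg {E : Type*} [NormedAddCommGroup E]
    [NormedSpace ℝ E] [FiniteDimensional ℝ E] [MeasurableSpace E] [BorelSpace E]
    {μ : Measure E} [μ.IsAddHaarMeasure] {s : ℝ} (hs : Module.finrank ℝ E < s) :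
    IntegrableOn (fun x : E => ‖x‖ ^ (-s)) (ball 0 1)ᶜ μ := by
  have hs0 : 0 < s := lt_of_le_of_lt (Nat.cast_nonneg _) hs
  refine ((integrable_one_add_norm hs).const_mul (2 ^ s)).integrableOn.mono'
    (continuous_norm.measurable.pow_const (-s)).aestronglyMeasurable
    ((ae_restrict_iff' measurableSet_ball.compl).2 (ae_of_all _ fun x hx => ?_))
  have hx1 : 1 ≤ ‖x‖ := by simpa using hx
  have hx0 : 0 < ‖x‖ := one_pos.trans_le hx1
  calc ‖‖x‖ ^ (-s)‖ = 2 ^ s * (2 * ‖x‖) ^ (-s) := by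
        rw [Real.norm_of_nonneg (by positivity), Real.mul_rpow zero_le_two hx0.le, ← mul_assoc,
          ← Real.rpow_add zero_lt_two, add_neg_cancel, Real.rpow_zero, one_mul]
    _ ≤ 2 ^ s * (1 + ‖x‖) ^ (-s) := by
        gcongr 2 ^ s * ?_
        exact Real.rpow_le_rpow_of_nonpos (by positivity) (by linarith) (by linarith)

theorem eLpNorm'_indicator_enorm_inv_lt_top {E : Type*} [NormedAddCommGroup E]
    [MeasurableSpace E] {μ : Measure E} [NullSingletonClass μ] {s : Set E}
    (hs : MeasurableSet s) {r : ℝ} (hr : 0 < r) (h : IntegrableOn (fun x : E => ‖x‖ ^ (-r)) s μ) :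
    eLpNorm' (s.indicator fun x => ‖x‖ₑ⁻¹) r μ < ∞ := by
  have hpow : (fun x => ‖s.indicator (fun x => ‖x‖ₑ⁻¹) x‖ₑ ^ r) =
      s.indicator fun x => ‖x‖ₑ ^ (-r) := by
    ext x
    by_cases hx : x ∈ s
    · simp [hx, ENNReal.inv_rpow, ENNReal.rpow_neg]
    · simp [hx, hr]
  have heq : ∀ᵐ x ∂μ.restrict s, ‖x‖ₑ ^ (-r) = ‖‖x‖ ^ (-r)‖ₑ := by
    refine ae_restrict_of_ae ((measure_eq_zero_iff_ae_notMem.1 (measure_singleton 0)).mono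
      fun x hx => ?_)
    have hx0 : 0 < ‖x‖ := norm_pos_iff.2 hx
    rw [Real.enorm_of_nonneg (by positivity), ← ENNReal.ofReal_rpow_of_pos hx0, ofReal_norm]
  rw [eLpNorm', hpow, lintegral_indicator hs, lintegral_congr_ae heq]
  exact ENNReal.rpow_lt_top_of_nonneg (by positivity) h.2.ne

end MeasureTheory

theorem measurable_K : Measurable K :=
  Measurable.ite (measurableSet_singleton 0) measurable_const (by fun_prop)

theorem enorm_K_le (z : R2) : ‖K z‖ₑ ≤ ‖z‖ₑ⁻¹ := by
  rcases eq_or_ne z 0 with rfl | hz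
  · simp [K]
  have hz0 : 0 < ‖z‖ := norm_pos_iff.2 hz
  have hnorm : ‖K z‖ = (π * ‖z‖)⁻¹ := by
    rw [K, if_neg hz, norm_smul, norm_neg, norm_inv, Real.norm_of_nonneg (by positivity)]
    field_simp
  rw [← ofReal_norm, ← ofReal_norm, hnorm, ← ENNReal.ofReal_inv_of_pos hz0]
  exact ENNReal.ofReal_le_ofReal
    (inv_anti₀ hz0 (le_mul_of_one_le_left hz0.le (by linarith [Real.pi_gt_three])))

theorem lintegral_enorm_smul_K_le (f : R2 → ℝ) (x : R2) :
    ∫⁻ y, ‖f y • K (x - y)‖ₑ ≤ ((‖f ·‖ₑ) ⋆ₗ fun z => ‖z‖ₑ⁻¹) x :=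
  lintegral_mono fun y => by
    rw [enorm_smul, neg_add_eq_sub]
    gcongr
    exact enorm_K_le _

theorem enorm_Kconv_le (f : R2 → ℝ) (x : R2) :
    ‖Kconv f x‖ₑ ≤ ((‖f ·‖ₑ) ⋆ₗ fun z => ‖z‖ₑ⁻¹) x :=
  (enorm_integral_le_lintegral_enorm _).trans (lintegral_enorm_smul_K_le f x)

theorem integrable_smul_K_of_lconvolution_lt_top {f : R2 → ℝ} (hf : AEStronglyMeasurable f)
    {x : R2} (hx : ((‖f ·‖ₑ) ⋆ₗ fun z => ‖z‖ₑ⁻¹) x < ∞) :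
    Integrable fun y => f y • K (x - y) :=
  ⟨hf.smul (measurable_K.comp (measurable_const.sub measurable_id)).aestronglyMeasurable,
    (lintegral_enorm_smul_K_le f x).trans_lt hx⟩

theorem aestronglyMeasurable_Kconv {f : R2 → ℝ} (hf : AEStronglyMeasurable f) :
    AEStronglyMeasurable (Kconv f) := by
  have hmk : Kconv f = Kconv (hf.mk f) := funext fun x =>
    integral_congr_ae (hf.ae_eq_mk.mono fun y hy => by simp only [hy])
  rw [hmk]
  exact ((hf.stronglyMeasurable_mk.measurable.comp measurable_snd).smul
    (measurable_K.comp (measurable_fst.sub measurable_snd))).stronglyMeasurable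
    |>.integral_prod_right'.aestronglyMeasurable

theorem exists_eLpNorm_lconvolution_indicator_le {s : Set R2} (hs : MeasurableSet s) {p q : ℝ}
    (hq : 1 ≤ q) (hqp : q ≤ p)
    (hint : IntegrableOn (fun x : R2 => ‖x‖ ^ (-(1 + 1 / p - 1 / q)⁻¹)) s) :
    ∃ c < ∞, ∀ ψ : R2 → ℝ≥0∞, AEMeasurable ψ →
      eLpNorm (ψ ⋆ₗ s.indicator fun z => ‖z‖ₑ⁻¹) (ENNReal.ofReal p) volume ≤
        c * eLpNorm ψ (ENNReal.ofReal q) volume := by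
  have hq0 : 0 < q := one_pos.trans_le hq
  have hp0 : 0 < p := hq0.trans_le hqp
  set r := (1 + 1 / p - 1 / q)⁻¹
  have hpt : 1 / p ≤ 1 + 1 / p - 1 / q := by
    have : 1 / q ≤ 1 := (div_le_one hq0).2 hq
    linarith
  have hr : 0 < r := inv_pos.2 ((one_div_pos.2 hp0).trans_le hpt)
  have hrp : r ≤ p := (inv_anti₀ (one_div_pos.2 hp0) hpt).trans_eq (by rw [one_div, inv_inv])
  have hqr : 1 / q + 1 / r = 1 + 1 / p := by rw [one_div r, inv_inv]; ring
  refine ⟨eLpNorm' (s.indicator fun z => ‖z‖ₑ⁻¹) r volume,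
    eLpNorm'_indicator_enorm_inv_lt_top hs hr hint, fun ψ hψ => ?_⟩
  rw [eLpNorm_eq_eLpNorm' (by simpa) ENNReal.ofReal_ne_top,
    eLpNorm_eq_eLpNorm' (by simpa) ENNReal.ofReal_ne_top, ENNReal.toReal_ofReal hp0.le,
    ENNReal.toReal_ofReal hq0.le, mul_comm]
  exact eLpNorm'_lconvolution_le hψ (measurable_enorm.inv.indicator hs).aemeasurable hq0 hr hqp
    hrp hqr

theorem exists_eLpNorm_lconvolution_ball_le {p q : ℝ} (hq : 1 ≤ q) (hqp : q ≤ p)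
    (hq_gt : 2 * p / (p + 2) < q) :
    ∃ c < ∞, ∀ ψ : R2 → ℝ≥0∞, AEMeasurable ψ →
      eLpNorm (ψ ⋆ₗ (ball 0 1).indicator fun z => ‖z‖ₑ⁻¹) (ENNReal.ofReal p) volume ≤
        c * eLpNorm ψ (ENNReal.ofReal q) volume := by
  have hp0 : 0 < p := by linarith
  have ht : 2⁻¹ < 1 + 1 / p - 1 / q := by
    rw [div_lt_iff₀ (by linarith)] at hq_gt
    field_simp
    nlinarith
  refine exists_eLpNorm_lconvolution_indicator_le measurableSet_ball hq hqp
    (integrableOn_ball_of_norm_le_rpow (C := 1) (α := (1 + 1 / p - 1 / q)⁻¹) (by simp) ?_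
      (ae_of_all _ fun x => ?_) (continuous_norm.measurable.pow_const _).aestronglyMeasurable)
  · simpa using inv_lt_of_inv_lt₀ two_pos ht
  · rw [one_mul, Real.norm_of_nonneg (by positivity)]

theorem exists_eLpNorm_lconvolution_compl_ball_le {p q : ℝ} (hq : 1 ≤ q) (hqp : q ≤ p)
    (hq_lt : q < 2 * p / (p + 2)) :
    ∃ c < ∞, ∀ ψ : R2 → ℝ≥0∞, AEMeasurable ψ →
      eLpNorm (ψ ⋆ₗ (ball 0 1)ᶜ.indicator fun z => ‖z‖ₑ⁻¹) (ENNReal.ofReal p) volume ≤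
        c * eLpNorm ψ (ENNReal.ofReal q) volume := by
  have hp0 : 0 < p := by linarith
  have ht0 : 0 < 1 + 1 / p - 1 / q := by
    have : 1 / q ≤ 1 := (div_le_one (by linarith)).2 hq
    have : 0 < 1 / p := by positivity
    linarith
  have ht : 1 + 1 / p - 1 / q < 2⁻¹ := by
    rw [lt_div_iff₀ (by linarith)] at hq_lt
    field_simp
    nlinarith
  refine exists_eLpNorm_lconvolution_indicator_le measurableSet_ball.compl hq hqp
    (integrableOn_compl_ball_norm_rpow_neg ?_)
  simpa using (lt_inv_comm₀ two_pos ht0).2 ht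

theorem exists_eLpNorm_lconvolution_enorm_inv_le {p q₁ q₂ : ℝ} (hp : 1 ≤ p) (hq₁ : 1 ≤ q₁)
    (hq₂ : 1 ≤ q₂) (hq₁l : 2 * p / (p + 2) < q₁) (hq₁u : q₁ ≤ p) (hq₂u : q₂ < 2 * p / (p + 2)) :
    ∃ C : ℝ, 0 < C ∧ ∀ ψ : R2 → ℝ≥0∞, AEMeasurable ψ →
      eLpNorm (ψ ⋆ₗ fun z => ‖z‖ₑ⁻¹) (ENNReal.ofReal p) volume ≤
        ENNReal.ofReal C *
          (eLpNorm ψ (ENNReal.ofReal q₁) volume + eLpNorm ψ (ENNReal.ofReal q₂) volume) := by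
  have hq₂p : q₂ ≤ p := hq₂u.le.trans ((div_le_iff₀ (by linarith)).2 (by nlinarith))
  obtain ⟨c₁, hc₁, hnear⟩ := exists_eLpNorm_lconvolution_ball_le hq₁ hq₁u hq₁l
  obtain ⟨c₂, hc₂, hfar⟩ := exists_eLpNorm_lconvolution_compl_ball_le hq₂ hq₂p hq₂u
  have hc : c₁ + c₂ ≤ ENNReal.ofReal ((c₁ + c₂).toReal + 1) := by
    rw [ENNReal.ofReal_add ENNReal.toReal_nonneg zero_le_one,
      ENNReal.ofReal_toReal (ENNReal.add_lt_top.2 ⟨hc₁, hc₂⟩).ne]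
    exact le_self_add
  refine ⟨(c₁ + c₂).toReal + 1, by positivity, fun ψ hψ => ?_⟩
  have hk₁ : Measurable ((ball (0 : R2) 1).indicator fun z => ‖z‖ₑ⁻¹) :=
    measurable_enorm.inv.indicator measurableSet_ball
  have hk₂ : Measurable ((ball (0 : R2) 1)ᶜ.indicator fun z => ‖z‖ₑ⁻¹) :=
    measurable_enorm.inv.indicator measurableSet_ball.compl
  set N₁ := eLpNorm ψ (ENNReal.ofReal q₁) volume
  set N₂ := eLpNorm ψ (ENNReal.ofReal q₂) volume
  calc eLpNorm (ψ ⋆ₗ fun z => ‖z‖ₑ⁻¹) (ENNReal.ofReal p) volume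
      = eLpNorm (ψ ⋆ₗ (ball 0 1).indicator (fun z => ‖z‖ₑ⁻¹) +
          ψ ⋆ₗ (ball 0 1)ᶜ.indicator fun z => ‖z‖ₑ⁻¹) (ENNReal.ofReal p) volume := by
        rw [← lconvolution_add_right hψ hk₁,
          Set.indicator_self_add_compl]
    _ ≤ c₁ * N₁ + c₂ * N₂ :=
        (eLpNorm_add_le (aemeasurable_lconvolution hψ hk₁.aemeasurable).aestronglyMeasurable
          (aemeasurable_lconvolution hψ hk₂.aemeasurable).aestronglyMeasurable
          (ENNReal.one_le_ofReal.2 hp)).trans (add_le_add (hnear ψ hψ) (hfar ψ hψ))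
    _ ≤ (c₁ + c₂) * (N₁ + N₂) := by
        rw [mul_add]
        exact add_le_add (by gcongr; exact le_self_add) (by gcongr; exact le_add_self)
    _ ≤ _ := by gcongr

theorem Kconv_young_general (p q₁ q₂ : ℝ) (hp : 1 ≤ p) (hq₁ : 1 ≤ q₁) (hq₂ : 1 ≤ q₂)
    (hq₁l : 2 * p / (p + 2) < q₁) (hq₁u : q₁ ≤ p)
    (hq₂u : q₂ < 2 * p / (p + 2)) :
    ∃ C : ℝ, 0 < C ∧
      ∀ f : R2 → ℝ, MemLp f (ENNReal.ofReal q₁) volume → MemLp f (ENNReal.ofReal q₂) volume →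
        (∀ᵐ x : R2 ∂volume, Integrable (fun y => f y • K (x - y))) ∧
        MemLp (Kconv f) (ENNReal.ofReal p) volume ∧
        eLpNorm (Kconv f) (ENNReal.ofReal p) volume ≤
          ENNReal.ofReal C *
            (eLpNorm f (ENNReal.ofReal q₁) volume + eLpNorm f (ENNReal.ofReal q₂) volume) := by
  obtain ⟨C, hC, hbound⟩ := exists_eLpNorm_lconvolution_enorm_inv_le hp hq₁ hq₂ hq₁l hq₁u hq₂u
  refine ⟨C, hC, fun f hf₁ hf₂ => ?_⟩
  have hψ : AEMeasurable (‖f ·‖ₑ) := hf₁.1.enorm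
  have hmaj := hbound _ hψ
  rw [eLpNorm_enorm, eLpNorm_enorm] at hmaj
  have hfin := hmaj.trans_lt (ENNReal.mul_lt_top ENNReal.ofReal_lt_top
    (ENNReal.add_lt_top.2 ⟨hf₁.2, hf₂.2⟩))
  have hKconv : eLpNorm (Kconv f) (ENNReal.ofReal p) volume ≤
      eLpNorm ((‖f ·‖ₑ) ⋆ₗ fun z => ‖z‖ₑ⁻¹) (ENNReal.ofReal p) volume :=
    eLpNorm_mono_enorm (enorm_Kconv_le f)
  refine ⟨?_, ⟨aestronglyMeasurable_Kconv hf₁.1, hKconv.trans_lt hfin⟩, hKconv.trans hmaj⟩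
  filter_upwards [ae_lt_top_of_eLpNorm_lt_top (aemeasurable_lconvolution hψ (by fun_prop))
    (ENNReal.ofReal_pos.2 (by linarith)).ne' ENNReal.ofReal_ne_top hfin] with x hx
  exact integrable_smul_K_of_lconvolution_lt_top hf₁.1 hx

/-- the Young-type inequality
`‖K∗f‖_{L^p} ≤ C (‖f‖_{L^{q₁}} + ‖f‖_{L^{q₂}})` for `2p/(p+2) < q₁ ≤ p` and
`p/(p+1) < q₂ < 2p/(p+2)`. -/
theorem Kconv_young (p q₁ q₂ : ℝ) (hp : 1 ≤ p) (hq₁ : 1 ≤ q₁) (hq₂ : 1 ≤ q₂)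
    (hq₁l : 2 * p / (p + 2) < q₁) (hq₁u : q₁ ≤ p)
    (hq₂l : p / (p + 1) < q₂) (hq₂u : q₂ < 2 * p / (p + 2)) :
    ∃ C : ℝ, 0 < C ∧
      ∀ f : R2 → ℝ, MemLp f (ENNReal.ofReal q₁) volume → MemLp f (ENNReal.ofReal q₂) volume →
        (∀ᵐ x : R2 ∂volume, Integrable (fun y => f y • K (x - y))) ∧
        MemLp (Kconv f) (ENNReal.ofReal p) volume ∧
        eLpNorm (Kconv f) (ENNReal.ofReal p) volume ≤
          ENNReal.ofReal C *
            (eLpNorm f (ENNReal.ofReal q₁) volume + eLpNorm f (ENNReal.ofReal q₂) volume) :=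
  Kconv_young_general p q₁ q₂ hp hq₁ hq₂ hq₁l hq₁u hq₂u
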